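/- Let Q be a quasi-order, let σ be an indecomposable transfinite sequence over Q, and let τ_0, τ_1, …, τ_{k-1} (for some finite k ≥ 1) be arbitrary transfinite sequences over Q. If σ is embeddable in the concatenation τ_0 + τ_1 + ⋯ + τ_{k-1}, then σ is embeddable in τ_j for some j < k. -/

import Mathlib

universe u v

open Ordinal

/-- A quasi-order: a reflexive transitive binary relation. -/
def IsQO {Q : Type u} (le : Q → Q → Prop) : Prop :=
  Reflexive le ∧ Transitive le

/-- A (nonempty) transfinite sequence over `Q` : a length `> 0` together with values;
values at indices `≥ length` are irrelevant junk. -/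
structure TSeq (Q : Type u) : Type (u + 1) where
  length : Ordinal.{u}
  length_pos : 0 < length
  val : Ordinal.{u} → Q

/-- Sequence embeddability `σ ≼ τ` : there is a strictly increasing (hence injective) map
of the indices of `σ` into the indices of `τ` which respects the quasi-order on values. -/
def SeqLE {Q : Type u} (le : Q → Q → Prop) (σ τ : TSeq Q) : Prop :=
  ∃ f : Ordinal.{u} → Ordinal.{u},
    (∀ i, i < σ.length → f i < τ.length) ∧
    (∀ i j, i < j → j < σ.length → f i < f j) ∧
    (∀ i, i < σ.length → le (σ.val i) (τ.val (f i)))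

/-- A sequence has finite range if only finitely many elements of `Q` occur in it. -/
def TSeq.FinRange {Q : Type u} (σ : TSeq Q) : Prop :=
  (σ.val '' Set.Iio σ.length).Finite

/-- The proper tail of `σ` starting at index `δ` (of length `-δ + |σ|`). -/
noncomputable def TSeq.tail {Q : Type u} (σ : TSeq Q) (δ : Ordinal.{u})
    (h : δ < σ.length) : TSeq Q where
  length := σ.length - δ
  length_pos := Ordinal.lt_sub.mpr (by simpa using h)
  val := fun i => σ.val (δ + i)

/-- A sequence is indecomposable if it embeds into each of its proper tails. -/
def Indecomposable {Q : Type u} (le : Q → Q → Prop) (σ : TSeq Q) : Prop :=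
  ∀ (δ : Ordinal.{u}) (_ : 0 < δ) (h : δ < σ.length), SeqLE le σ (σ.tail δ h)

open Classical in
/-- Concatenation of transfinite sequences: a copy of `τ` placed after a copy of `σ`. -/
noncomputable def TSeq.concat {Q : Type u} (σ τ : TSeq Q) : TSeq Q where
  length := σ.length + τ.length
  length_pos := lt_of_lt_of_le σ.length_pos (le_add_right le_rfl)
  val := fun i => if i < σ.length then σ.val i else τ.val (i - σ.length)

/-- The concatenation `σ + τ₀ + τ₁ + ⋯` of a nonempty finite list of sequences. -/
noncomputable def TSeq.concatAll {Q : Type u} (σ : TSeq Q) (l : List (TSeq Q)) : TSeq Q :=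
  l.foldl TSeq.concat σ

/-! An embedding of `σ` into `τ₁ + τ₂` either lands entirely in `τ₁`, or from some index `δ` on it
lands in `τ₂`; since an indecomposable `σ` embeds into its tail from `δ`, it then embeds into `τ₂`.
Induction on the number of pieces does the rest. -/

namespace TSeq

variable {Q : Type u}

theorem concat_val_of_lt {σ τ : TSeq Q} {i : Ordinal.{u}} (hi : i < σ.length) :
    (σ.concat τ).val i = σ.val i := by
  simp [concat, hi]

theorem concat_val_add (σ τ : TSeq Q) (i : Ordinal.{u}) :
    (σ.concat τ).val (σ.length + i) = τ.val i := by
  simp [concat]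

end TSeq

section SeqLE

variable {Q : Type u} {le : Q → Q → Prop}

theorem SeqLE.trans (ht : Transitive le) {σ τ ρ : TSeq Q} (h₁ : SeqLE le σ τ)
    (h₂ : SeqLE le τ ρ) : SeqLE le σ ρ := by
  obtain ⟨f, hf_lt, hf_mono, hf_le⟩ := h₁
  obtain ⟨g, hg_lt, hg_mono, hg_le⟩ := h₂
  exact ⟨g ∘ f, fun i hi => hg_lt _ (hf_lt i hi),
    fun i j hij hj => hg_mono _ _ (hf_mono i j hij hj) (hf_lt j hj),
    fun i hi => ht (hf_le i hi) (hg_le _ (hf_lt i hi))⟩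

theorem seqLE_tail_zero (hr : Reflexive le) (σ : TSeq Q) (h : 0 < σ.length) :
    SeqLE le σ (σ.tail 0 h) :=
  ⟨id, fun i hi => by simpa [TSeq.tail] using hi, fun _ _ hij _ => hij,
    fun i _ => by simpa [TSeq.tail] using hr (σ.val i)⟩

theorem Indecomposable.seqLE_tail (hr : Reflexive le) {σ : TSeq Q} (hσ : Indecomposable le σ)
    (δ : Ordinal.{u}) (h : δ < σ.length) : SeqLE le σ (σ.tail δ h) := by
  rcases (zero_le : (0 : Ordinal) ≤ δ).eq_or_lt with rfl | hδ
  · exact seqLE_tail_zero hr σ h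
  · exact hσ δ hδ h

/-- If the embedding `f` sends some `δ` to `f δ ≥ |τ₁|`, the tail from `δ` embeds into `τ₂`
via `i ↦ f (δ + i) - |τ₁|`. -/
theorem seqLE_or_tail_seqLE_of_seqLE_concat {σ τ₁ τ₂ : TSeq Q}
    (h : SeqLE le σ (τ₁.concat τ₂)) :
    SeqLE le σ τ₁ ∨ ∃ δ, ∃ hδ : δ < σ.length, SeqLE le (σ.tail δ hδ) τ₂ := by
  obtain ⟨f, hf_lt, hf_mono, hf_le⟩ := h
  by_cases hleft : ∀ i, i < σ.length → f i < τ₁.length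
  · refine .inl ⟨f, hleft, hf_mono, fun i hi => ?_⟩
    simpa only [TSeq.concat_val_of_lt (hleft i hi)] using hf_le i hi
  obtain ⟨δ, hδ, hfδ⟩ : ∃ δ < σ.length, τ₁.length ≤ f δ := by simpa using hleft
  have hshift : ∀ i, δ + i < σ.length → f (δ + i) = τ₁.length + (f (δ + i) - τ₁.length) := by
    intro i hi
    refine (Ordinal.add_sub_cancel_of_le (hfδ.trans ?_)).symm
    rcases (le_add_right le_rfl : δ ≤ δ + i).eq_or_lt with heq | hlt
    · exact heq ▸ le_rfl
    · exact (hf_mono _ _ hlt hi).le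
  refine .inr ⟨δ, hδ, fun i => f (δ + i) - τ₁.length, fun i hi => ?_, fun i j hij hj => ?_,
    fun i hi => ?_⟩
  · have hi' : δ + i < σ.length := Ordinal.lt_sub.mp hi
    have := hf_lt _ hi'
    rw [hshift i hi', TSeq.concat] at this
    exact (add_lt_add_iff_left _).mp this
  · have hj' : δ + j < σ.length := Ordinal.lt_sub.mp hj
    have hij' : δ + i < δ + j := (add_lt_add_iff_left δ).mpr hij
    have := hf_mono _ _ hij' hj'
    rwa [hshift i (hij'.trans hj'), hshift j hj', add_lt_add_iff_left] at this
  · have hi' : δ + i < σ.length := Ordinal.lt_sub.mp hi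
    have := hf_le _ hi'
    rwa [hshift i hi', TSeq.concat_val_add] at this

theorem Indecomposable.seqLE_or_seqLE_of_seqLE_concat (hqo : IsQO le) {σ : TSeq Q}
    (hσ : Indecomposable le σ) {τ₁ τ₂ : TSeq Q} (h : SeqLE le σ (τ₁.concat τ₂)) :
    SeqLE le σ τ₁ ∨ SeqLE le σ τ₂ :=
  (seqLE_or_tail_seqLE_of_seqLE_concat h).imp_right fun ⟨δ, hδ, htail⟩ =>
    (hσ.seqLE_tail hqo.1 δ hδ).trans hqo.2 htail

end SeqLE

/-- If an indecomposable sequence `σ` embeds in a finite concatenation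
`τ₀ + τ₁ + ⋯ + τ_{k-1}` (with `k ≥ 1`) of arbitrary transfinite sequences, then `σ`
embeds in `τ_j` for some `j < k`. -/
theorem indecomposable_seqLE_concatAll {Q : Type u}
    (le : Q → Q → Prop) (hqo : IsQO le)
    (σ : TSeq Q) (hσ : Indecomposable le σ)
    (τ : TSeq Q) (τs : List (TSeq Q))
    (h : SeqLE le σ (TSeq.concatAll τ τs)) :
    ∃ c ∈ τ :: τs, SeqLE le σ c := by
  induction τs generalizing τ with
  | nil => exact ⟨τ, List.mem_cons_self, h⟩
  | cons t rest ih =>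
    obtain ⟨c, hc, hσc⟩ := ih (τ.concat t) h
    rcases List.mem_cons.mp hc with rfl | hc
    · rcases hσ.seqLE_or_seqLE_of_seqLE_concat hqo hσc with hτ | ht
      · exact ⟨τ, by simp, hτ⟩
      · exact ⟨t, by simp, ht⟩
    · exact ⟨c, by simp [hc], hσc⟩
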